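/- Let $\sigma$ be the cone over a lattice polygon $P \subset N_\mathbb{R} \cong \mathbb{R}^2$ placed at height 1 in $\widetilde{N} = N \oplus \mathbb{Z}$, with Gorenstein degree $R^* = (0, 1) \in \widetilde{M}$, and suppose $(m, Q)$ is a deformation pair of $P$ with $Q$ a lattice polytope in $(\pi_M(m) = 0)$. Then for every $\mathbf{k} \in \mathbb{N}^r$ and every $0 \le i \le \eta_Q(\mathbf{k})$, the element $s_\mathbf{k} - i\, m$ lies in the dual cone $\sigma^\vee$; equivalently $\langle (v,1), s_\mathbf{k} - im \rangle \ge 0$ for every vertex $v$ of $P$. -/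
import Mathlib


open Pointwise

/-- Embedding of `ℤ²` into `ℝ²`. -/
def emb (v : Fin 2 → ℤ) : Fin 2 → ℝ := fun i => (v i : ℝ)

/-- The real slice `P ∩ (φ_m = i)`. -/
def realSlice (P : Set (Fin 2 → ℝ)) (m : (Fin 2 → ℤ) × ℤ) (i : ℝ) : Set (Fin 2 → ℝ) :=
  {x ∈ P | (∑ j, (m.1 j : ℝ) * x j) + (m.2 : ℝ) = i}

lemma hull_bound (S : Finset (Fin 2 → ℤ)) (η : ℤ) (cc : Fin 2 → ℤ)
    (h : ∀ w ∈ S, -η ≤ ∑ idx, w idx * cc idx)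
    (x : Fin 2 → ℝ) (hx : x ∈ convexHull ℝ (emb '' (S : Set (Fin 2 → ℤ)))) :
    -(η : ℝ) ≤ ∑ idx, x idx * (cc idx : ℝ) := by
  have hconv : Convex ℝ {y : Fin 2 → ℝ | -(η : ℝ) ≤ ∑ idx, y idx * (cc idx : ℝ)} := by
    intro a ha b hb s t hs ht hst
    simp only [Set.mem_setOf_eq] at *
    have heq : ∑ idx, (s • a + t • b) idx * (cc idx : ℝ)
        = s * (∑ idx, a idx * (cc idx : ℝ)) + t * (∑ idx, b idx * (cc idx : ℝ)) := by
      simp only [Pi.add_apply, Pi.smul_apply, smul_eq_mul, add_mul, Finset.sum_add_distrib,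
        Finset.mul_sum, mul_assoc]
    rw [heq]
    have h1 := mul_le_mul_of_nonneg_left ha hs
    have h2 := mul_le_mul_of_nonneg_left hb ht
    have h3 : s * -(η:ℝ) + t * -(η:ℝ) = -(η:ℝ) := by rw [← add_mul, hst]; ring
    linarith
  have hsub : emb '' (S : Set (Fin 2 → ℤ)) ⊆
      {y : Fin 2 → ℝ | -(η : ℝ) ≤ ∑ idx, y idx * (cc idx : ℝ)} := fun y hy => by
    obtain ⟨w, hw, rfl⟩ := hy
    have := h w hw
    show -(η:ℝ) ≤ ∑ idx, (emb w) idx * (cc idx : ℝ)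
    unfold emb
    exact_mod_cast this
  exact convexHull_min hsub hconv hx

lemma eta_smul (S : Finset (Fin 2 → ℤ)) (η : (Fin 2 → ℤ) → ℤ)
    (h : ∀ c, IsLeast ((fun w : Fin 2 → ℤ => ∑ i, w i * c i) '' (S : Set (Fin 2 → ℤ)))
      (-(η c))) (n : ℕ) (cc : Fin 2 → ℤ) : η (n • cc) = n * η cc := by
  have h1 := h cc
  have h2 := h (n • cc)
  have key : IsLeast ((fun w : Fin 2 → ℤ => ∑ i, w i * (n • cc) i) '' (S : Set (Fin 2 → ℤ)))
      (-(n * η cc)) := by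
    constructor
    · obtain ⟨w, hw, hweq⟩ := h1.1
      simp only at hweq
      refine ⟨w, hw, ?_⟩
      simp only [Pi.smul_apply, smul_eq_mul]
      calc ∑ i, w i * (↑n * cc i) = n * ∑ i, w i * cc i := by
            rw [Finset.mul_sum]; apply Finset.sum_congr rfl; intro i _; ring
        _ = -(n * η cc) := by rw [hweq]; ring
    · rintro t ⟨w, hw, rfl⟩
      have hb := h1.2 ⟨w, hw, rfl⟩
      simp only [Pi.smul_apply, smul_eq_mul] at hb ⊢
      calc -(↑n * η cc) = n * (-(η cc)) := by ring
        _ ≤ n * ∑ i, w i * cc i := by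
            apply mul_le_mul_of_nonneg_left hb (by positivity)
        _ = ∑ i, w i * (↑n * cc i) := by
            rw [Finset.mul_sum]; apply Finset.sum_congr rfl; intro i _; ring
  have := h2.unique key
  omega

/-- Let `P = conv(V)` be a lattice polygon (placed at height 1, with Gorenstein degree
`R* = (0,1)`), let `(m, Q)` be a deformation pair of `P` with `Q = conv(W)` a lattice
polytope in `(π_M(m) = 0)`, and let `s_j = (c_j, η_P(c_j))` be generators of
`S_P = σ^∨ ∩ M̃`.  Then for every `𝐤 ∈ ℕʳ` and every `0 ≤ i ≤ η_Q(𝐤)`, the element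
`s_𝐤 - i m` lies in `σ^∨`, i.e. `⟨(v,1), s_𝐤 - i m⟩ ≥ 0` for every vertex `v` of `P`. -/
theorem stmt16
    (V W : Finset (Fin 2 → ℤ)) (hV : V.Nonempty) (hW : W.Nonempty)
    (m : (Fin 2 → ℤ) × ℤ)
    (hWm : ∀ w ∈ W, (∑ i, w i * m.1 i) = 0)
    (ηP ηQ : (Fin 2 → ℤ) → ℤ)
    (hηP : ∀ c, IsLeast ((fun v : Fin 2 → ℤ => ∑ i, v i * c i) '' (V : Set (Fin 2 → ℤ)))
      (-(ηP c)))
    (hηQ : ∀ c, IsLeast ((fun w : Fin 2 → ℤ => ∑ i, w i * c i) '' (W : Set (Fin 2 → ℤ)))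
      (-(ηQ c)))
    (hdef : ∀ j : ℕ,
      (realSlice (convexHull ℝ (emb '' (V : Set (Fin 2 → ℤ)))) m (j : ℝ)).Nonempty →
      ∃ R : Set (Fin 2 → ℝ), R.Nonempty ∧
        realSlice (convexHull ℝ (emb '' (V : Set (Fin 2 → ℤ)))) m (j : ℝ)
          = (j : ℝ) • (convexHull ℝ (emb '' (W : Set (Fin 2 → ℤ)))) + R)
    (r : ℕ) (c : Fin r → Fin 2 → ℤ) (k : Fin r → ℕ) (i : ℕ)
    (hi : (i : ℤ) ≤ (∑ j, ηQ (k j • c j)) - ηQ (∑ j, k j • c j)) :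
    ∀ v ∈ V,
      0 ≤ (∑ idx, v idx *
            ((∑ j, k j • ((c j, ηP (c j)) : (Fin 2 → ℤ) × ℤ)) - i • m).1 idx)
          + ((∑ j, k j • ((c j, ηP (c j)) : (Fin 2 → ℤ) × ℤ)) - i • m).2 := by
  intro v hv
  set s : Fin 2 → ℤ := ∑ j, k j • c j with hs
  set D : ℤ := (∑ idx, v idx * m.1 idx) + m.2 with hD
  set A : ℤ := (∑ idx, v idx * s idx) + ∑ j, (k j : ℤ) * ηP (c j) with hA
  -- lower bounds on finsets
  have hPlow : ∀ cc, ∀ u ∈ V, -(ηP cc) ≤ ∑ idx, u idx * cc idx :=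
    fun cc u hu => (hηP cc).2 ⟨u, hu, rfl⟩
  have hQlow : ∀ cc, ∀ w ∈ W, -(ηQ cc) ≤ ∑ idx, w idx * cc idx :=
    fun cc w hw => (hηQ cc).2 ⟨w, hw, rfl⟩
  -- the slice sum fact: s idx = ∑ j, (k j) * c j idx
  have hsidx : ∀ idx, s idx = ∑ j, (k j : ℤ) * c j idx := by
    intro idx
    rw [hs]
    simp [Finset.sum_apply]
  -- sum swap
  have hswap : (∑ idx, v idx * s idx) = ∑ j, (k j : ℤ) * (∑ idx, v idx * c j idx) := by
    calc (∑ idx, v idx * s idx) = ∑ idx, ∑ j, (k j : ℤ) * (v idx * c j idx) := by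
          apply Finset.sum_congr rfl; intro idx _
          rw [hsidx idx, Finset.mul_sum]
          apply Finset.sum_congr rfl; intro j _; ring
      _ = ∑ j, ∑ idx, (k j : ℤ) * (v idx * c j idx) := Finset.sum_comm
      _ = ∑ j, (k j : ℤ) * (∑ idx, v idx * c j idx) := by
          apply Finset.sum_congr rfl; intro j _; rw [Finset.mul_sum]
  have hA0 : 0 ≤ A := by
    rw [hA, hswap, ← Finset.sum_add_distrib]
    apply Finset.sum_nonneg
    intro j _
    rw [← mul_add]
    have := hPlow (c j) v hv
    nlinarith [this, Int.ofNat_nonneg (k j)]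
  -- key inequality
  have key : (i : ℤ) * D ≤ A := by
    rcases le_or_gt D 0 with hDle | hDpos
    · exact le_trans (mul_nonpos_of_nonneg_of_nonpos (by positivity) hDle) hA0
    · set d : ℕ := D.toNat with hdd
      have hdD : (d : ℤ) = D := Int.toNat_of_nonneg hDpos.le
      set P : Set (Fin 2 → ℝ) := convexHull ℝ (emb '' (V : Set (Fin 2 → ℤ))) with hP
      set Q : Set (Fin 2 → ℝ) := convexHull ℝ (emb '' (W : Set (Fin 2 → ℤ))) with hQ
      have hvP : emb v ∈ P := subset_convexHull ℝ _ ⟨v, hv, rfl⟩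
      have hvslice : emb v ∈ realSlice P m (d : ℝ) := by
        refine ⟨hvP, ?_⟩
        have h1 : (∑ j, (m.1 j : ℝ) * (emb v) j) = ((∑ idx, v idx * m.1 idx : ℤ) : ℝ) := by
          push_cast
          apply Finset.sum_congr rfl; intro j _
          simp [emb, mul_comm]
        rw [h1]
        have : ((d : ℤ) : ℝ) = ((∑ idx, v idx * m.1 idx : ℤ) : ℝ) + (m.2 : ℝ) := by
          rw [hdD, hD]; push_cast; ring
        push_cast at this ⊢
        linarith
      obtain ⟨R, hRne, hEq⟩ := hdef d ⟨_, hvslice⟩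
      have hvmem : emb v ∈ (d : ℝ) • Q + R := by rw [← hEq]; exact hvslice
      rw [Set.mem_add] at hvmem
      obtain ⟨y, hy, ρ, hρ, hsum⟩ := hvmem
      rw [Set.mem_smul_set] at hy
      obtain ⟨q, hq, rfl⟩ := hy
      -- pointwise decomposition
      have hv_eq : ∀ idx, (v idx : ℝ) = (d : ℝ) * q idx + ρ idx := by
        intro idx
        have := congrFun hsum idx
        simpa [emb] using this.symm
      -- per-j bound on ηP
      have F1 : ∀ j, (d : ℝ) * ((ηQ (c j) : ℤ) : ℝ) - (∑ idx, ρ idx * (c j idx : ℝ))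
          ≤ ((ηP (c j) : ℤ) : ℝ) := by
        intro j
        obtain ⟨w, hw, hwe⟩ := (hηQ (c j)).1
        simp only at hwe
        have hxQ : (d : ℝ) • emb w ∈ (d : ℝ) • Q :=
          Set.smul_mem_smul_set (subset_convexHull ℝ _ ⟨w, hw, rfl⟩)
        have hxslice : (d : ℝ) • emb w + ρ ∈ realSlice P m (d : ℝ) := by
          rw [hEq]; exact Set.add_mem_add hxQ hρ
        have hxP : (d : ℝ) • emb w + ρ ∈ P := hxslice.1
        have hb := hull_bound V (ηP (c j)) (c j) (hPlow (c j)) _ hxP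
        have hcomp : ∑ idx, ((d : ℝ) • emb w + ρ) idx * (c j idx : ℝ)
            = (d : ℝ) * ((∑ idx, w idx * c j idx : ℤ) : ℝ)
              + ∑ idx, ρ idx * (c j idx : ℝ) := by
          push_cast
          rw [Finset.mul_sum, ← Finset.sum_add_distrib]
          apply Finset.sum_congr rfl; intro idx _
          simp [emb]
          ring
        rw [hcomp, hwe] at hb
        push_cast at hb
        linarith
      have F2 : -((ηQ s : ℤ) : ℝ) ≤ ∑ idx, q idx * (s idx : ℝ) :=
        hull_bound W (ηQ s) s (hQlow s) q hq
      -- homogeneity applied to hi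
      have hi' : (i : ℤ) ≤ (∑ j, (k j : ℤ) * ηQ (c j)) - ηQ s := by
        have he : ∀ j, ηQ (k j • c j) = (k j : ℤ) * ηQ (c j) :=
          fun j => eta_smul W ηQ hηQ (k j) (c j)
        calc (i : ℤ) ≤ (∑ j, ηQ (k j • c j)) - ηQ s := hi
          _ = (∑ j, (k j : ℤ) * ηQ (c j)) - ηQ s := by
              rw [Finset.sum_congr rfl fun j _ => he j]
      -- real versions
      have E1 : (∑ idx, (v idx : ℝ) * (s idx : ℝ))
          = (d : ℝ) * (∑ idx, q idx * (s idx : ℝ)) + ∑ idx, ρ idx * (s idx : ℝ) := by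
        rw [Finset.mul_sum, ← Finset.sum_add_distrib]
        apply Finset.sum_congr rfl; intro idx _
        rw [hv_eq idx]; ring
      have E2 : (∑ idx, ρ idx * (s idx : ℝ))
          = ∑ j, (k j : ℝ) * (∑ idx, ρ idx * (c j idx : ℝ)) := by
        calc (∑ idx, ρ idx * (s idx : ℝ))
            = ∑ idx, ∑ j, (k j : ℝ) * (ρ idx * (c j idx : ℝ)) := by
              apply Finset.sum_congr rfl; intro idx _
              have : ((s idx : ℤ) : ℝ) = ∑ j, (k j : ℝ) * (c j idx : ℝ) := by
                rw [hsidx idx]; push_cast; rfl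
              rw [this, Finset.mul_sum]
              apply Finset.sum_congr rfl; intro j _; ring
          _ = ∑ j, ∑ idx, (k j : ℝ) * (ρ idx * (c j idx : ℝ)) := Finset.sum_comm
          _ = ∑ j, (k j : ℝ) * (∑ idx, ρ idx * (c j idx : ℝ)) := by
              apply Finset.sum_congr rfl; intro j _; rw [Finset.mul_sum]
      have E3 : ∑ j, (k j : ℝ) * ((d : ℝ) * ((ηQ (c j) : ℤ) : ℝ)
              - (∑ idx, ρ idx * (c j idx : ℝ)))
          ≤ ∑ j, (k j : ℝ) * ((ηP (c j) : ℤ) : ℝ) := by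
        apply Finset.sum_le_sum
        intro j _
        exact mul_le_mul_of_nonneg_left (F1 j) (by positivity)
      have E3' : (d : ℝ) * (∑ j, (k j : ℝ) * ((ηQ (c j) : ℤ) : ℝ))
            - (∑ j, (k j : ℝ) * (∑ idx, ρ idx * (c j idx : ℝ)))
          ≤ ∑ j, (k j : ℝ) * ((ηP (c j) : ℤ) : ℝ) := by
        refine le_trans (le_of_eq ?_) E3
        rw [Finset.mul_sum, ← Finset.sum_sub_distrib]
        apply Finset.sum_congr rfl; intro j _; ring
      have hi'' : (i : ℝ) ≤ (∑ j, (k j : ℝ) * ((ηQ (c j) : ℤ) : ℝ)) - ((ηQ s : ℤ) : ℝ) := by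
        exact_mod_cast hi'
      have RG : (i : ℝ) * (d : ℝ)
          ≤ (∑ idx, (v idx : ℝ) * (s idx : ℝ)) + ∑ j, (k j : ℝ) * ((ηP (c j) : ℤ) : ℝ) := by
        have hd0 : (0 : ℝ) ≤ (d : ℝ) := by positivity
        nlinarith [E1, E2, E3', F2, hi'', mul_le_mul_of_nonneg_left hi'' hd0,
          mul_le_mul_of_nonneg_left F2 hd0]
      rw [← hdD, hA]
      exact_mod_cast RG
  -- reduce the goal to key
  have hfst : ((∑ j, k j • ((c j, ηP (c j)) : (Fin 2 → ℤ) × ℤ)) - i • m).1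
      = s - i • m.1 := by
    rw [hs]; simp [Prod.fst_sub, Prod.fst_sum]
  have hsnd : ((∑ j, k j • ((c j, ηP (c j)) : (Fin 2 → ℤ) × ℤ)) - i • m).2
      = (∑ j, (k j : ℤ) * ηP (c j)) - (i : ℤ) * m.2 := by
    simp [Prod.snd_sub, Prod.snd_sum, mul_comm]
  rw [hfst, hsnd]
  have hexp : (∑ idx, v idx * (s - i • m.1) idx)
      = (∑ idx, v idx * s idx) - (i : ℤ) * (∑ idx, v idx * m.1 idx) := by
    rw [Finset.mul_sum, ← Finset.sum_sub_distrib]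
    apply Finset.sum_congr rfl; intro idx _
    simp [Pi.sub_apply, mul_sub]
    ring
  rw [hexp]
  have : (i : ℤ) * D = (i : ℤ) * (∑ idx, v idx * m.1 idx) + (i : ℤ) * m.2 := by
    rw [hD]; ring
  linarith [key, this]
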